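/- The inequality (1−p)·x/(sinh x) + p·x/(tanh x) > 1 holds for all x > 0 if and only if p ≥ 1/3, and the inequality 1 > (1−q)·x/(sinh x) + q·x/(tanh x) holds for all x > 0 if and only if q ≤ 0. -/

import Mathlib

/-!
Writing `F_r(x) = (1 - r) x / sinh x + r x / tanh x = (x + r x (cosh x - 1)) / sinh x`,
one has `F_r(x) > 1` iff `r > g(x)` and `F_r(x) < 1` iff `r < g(x)`, where
`g(x) = (sinh x - x) / (x (cosh x - 1))`. Both claims therefore reduce to the range of `g` on
`(0, ∞)`: from `1 / (3 cosh x) ≤ g(x) < 1/3` we get `sup g = 1/3` (approached as `x → 0⁺`), and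
from `0 < g(x) ≤ 1/x` we get `inf g = 0` (approached as `x → ∞`). The bounds on `g` are
comparisons between elementary functions, each proved by comparing derivatives.
-/

open Real Filter Topology Set

section

variable {α β : Type*} [TopologicalSpace β] [LinearOrder β] [OrderClosedTopology β]
  {s : Set α} {g : α → β} {c : β} {l : Filter α} [l.NeBot]

lemma forall_apply_lt_iff_le_of_tendsto (hs : ∀ᶠ x in l, x ∈ s) (hg : ∀ x ∈ s, g x < c)
    (hlim : Tendsto g l (𝓝 c)) (p : β) : (∀ x ∈ s, g x < p) ↔ c ≤ p :=
  ⟨fun h => le_of_tendsto hlim (hs.mono fun x hx => (h x hx).le),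
    fun hc x hx => (hg x hx).trans_le hc⟩

lemma forall_lt_apply_iff_le_of_tendsto (hs : ∀ᶠ x in l, x ∈ s) (hg : ∀ x ∈ s, c < g x)
    (hlim : Tendsto g l (𝓝 c)) (p : β) : (∀ x ∈ s, p < g x) ↔ p ≤ c :=
  ⟨fun h => ge_of_tendsto hlim (hs.mono fun x hx => (h x hx).le),
    fun hc x hx => hc.trans_lt (hg x hx)⟩

end

lemma lt_of_hasDerivAt_lt {f g f' g' : ℝ → ℝ} {a x : ℝ}
    (hf : ∀ y, HasDerivAt f (f' y) y) (hg : ∀ y, HasDerivAt g (g' y) y)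
    (ha : f a = g a) (hlt : ∀ y, a < y → f' y < g' y) (hx : a < x) : f x < g x := by
  have hmono : StrictMonoOn (g - f) (Ici a) :=
    strictMonoOn_of_deriv_pos (convex_Ici a)
      (fun y _ => ((hg y).sub (hf y)).continuousAt.continuousWithinAt)
      (fun y hy => by
        rw [interior_Ici] at hy
        rw [((hg y).sub (hf y)).deriv, sub_pos]
        exact hlt y hy)
  simpa [ha] using hmono self_mem_Ici hx.le hx

lemma sinh_lt_mul_cosh {x : ℝ} (hx : 0 < x) : sinh x < x * cosh x :=
  lt_of_hasDerivAt_lt (f := sinh) (g := fun y => y * cosh y)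
    (g' := fun y => cosh y + y * sinh y) hasDerivAt_sinh
    (fun y => by simpa using (hasDerivAt_id' y).fun_mul (hasDerivAt_cosh y)) (by simp)
    (fun y hy => lt_add_of_pos_right _ (mul_pos hy (sinh_pos_iff.2 hy))) hx

lemma two_mul_cosh_lt_two_add_mul_sinh {x : ℝ} (hx : 0 < x) :
    2 * cosh x < 2 + x * sinh x :=
  lt_of_hasDerivAt_lt (f := fun y => 2 * cosh y) (g := fun y => 2 + y * sinh y)
    (f' := fun y => 2 * sinh y) (g' := fun y => sinh y + y * cosh y)
    (fun y => (hasDerivAt_cosh y).const_mul 2)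
    (fun y => by simpa using ((hasDerivAt_id' y).fun_mul (hasDerivAt_sinh y)).const_add 2)
    (by simp) (fun y hy => by linarith [sinh_lt_mul_cosh hy]) hx

lemma three_mul_sinh_lt_mul_two_add_cosh {x : ℝ} (hx : 0 < x) :
    3 * sinh x < x * (2 + cosh x) :=
  lt_of_hasDerivAt_lt (f := fun y => 3 * sinh y) (g := fun y => y * (2 + cosh y))
    (f' := fun y => 3 * cosh y) (g' := fun y => 2 + cosh y + y * sinh y)
    (fun y => (hasDerivAt_sinh y).const_mul 3)
    (fun y => by simpa using (hasDerivAt_id' y).fun_mul ((hasDerivAt_cosh y).const_add 2))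
    (by simp) (fun y hy => by linarith [two_mul_cosh_lt_two_add_mul_sinh hy]) hx

lemma one_add_sq_div_two_lt_cosh {x : ℝ} (hx : 0 < x) : 1 + x ^ 2 / 2 < cosh x :=
  lt_of_hasDerivAt_lt (f := fun y => 1 + y ^ 2 / 2) (f' := id) (g' := sinh)
    (fun y => by simpa using ((hasDerivAt_pow 2 y).div_const 2).const_add 1)
    hasDerivAt_cosh (by simp) (fun y hy => self_lt_sinh_iff.2 hy) hx

lemma add_pow_three_div_six_lt_sinh {x : ℝ} (hx : 0 < x) : x + x ^ 3 / 6 < sinh x :=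
  lt_of_hasDerivAt_lt (f := fun y => y + y ^ 3 / 6) (f' := fun y => 1 + y ^ 2 / 2) (g' := cosh)
    (fun y => ((hasDerivAt_id' y).fun_add ((hasDerivAt_pow 3 y).div_const 6)).congr_deriv
      (by norm_num; ring))
    hasDerivAt_sinh (by simp) (fun y hy => one_add_sq_div_two_lt_cosh hy) hx

lemma two_mul_cosh_lt_two_add_sq_mul_cosh {x : ℝ} (hx : 0 < x) :
    2 * cosh x < 2 + x ^ 2 * cosh x :=
  lt_of_hasDerivAt_lt (f := fun y => 2 * cosh y) (g := fun y => 2 + y ^ 2 * cosh y)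
    (f' := fun y => 2 * sinh y) (g' := fun y => 2 * y * cosh y + y ^ 2 * sinh y)
    (fun y => (hasDerivAt_cosh y).const_mul 2)
    (fun y => by simpa using ((hasDerivAt_pow 2 y).fun_mul (hasDerivAt_cosh y)).const_add 2)
    (by simp)
    (fun y hy => by nlinarith [sinh_lt_mul_cosh hy, sinh_pos_iff.2 hy, sq_pos_of_pos hy]) hx

lemma sinh_sub_self_le_cosh_sub_one (x : ℝ) : sinh x - x ≤ cosh x - 1 := by
  linarith [cosh_sub_sinh x, add_one_le_exp (-x)]

noncomputable def huygensThreshold (x : ℝ) : ℝ := (sinh x - x) / (x * (cosh x - 1))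

lemma mul_cosh_sub_one_pos {x : ℝ} (hx : 0 < x) : 0 < x * (cosh x - 1) :=
  mul_pos hx (sub_pos.2 (one_lt_cosh.2 hx.ne'))

lemma huygens_mean_eq {x : ℝ} (hx : 0 < x) (r : ℝ) :
    (1 - r) * x / sinh x + r * x / tanh x = (x + r * (x * (cosh x - 1))) / sinh x := by
  have hs : sinh x ≠ 0 := (sinh_pos_iff.2 hx).ne'
  rw [tanh_eq_sinh_div_cosh]
  field_simp
  ring

lemma one_lt_huygens_mean_iff {x : ℝ} (hx : 0 < x) (r : ℝ) :
    1 < (1 - r) * x / sinh x + r * x / tanh x ↔ huygensThreshold x < r := by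
  rw [huygens_mean_eq hx, one_lt_div (sinh_pos_iff.2 hx), huygensThreshold,
    div_lt_iff₀ (mul_cosh_sub_one_pos hx), sub_lt_iff_lt_add']

lemma huygens_mean_lt_one_iff {x : ℝ} (hx : 0 < x) (r : ℝ) :
    (1 - r) * x / sinh x + r * x / tanh x < 1 ↔ r < huygensThreshold x := by
  rw [huygens_mean_eq hx, div_lt_one (sinh_pos_iff.2 hx), huygensThreshold,
    lt_div_iff₀ (mul_cosh_sub_one_pos hx), lt_sub_iff_add_lt']

lemma huygensThreshold_pos {x : ℝ} (hx : 0 < x) : 0 < huygensThreshold x :=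
  div_pos (sub_pos.2 (self_lt_sinh_iff.2 hx)) (mul_cosh_sub_one_pos hx)

lemma huygensThreshold_le_inv {x : ℝ} (hx : 0 < x) : huygensThreshold x ≤ x⁻¹ := by
  rw [huygensThreshold, div_le_iff₀ (mul_cosh_sub_one_pos hx), inv_mul_cancel_left₀ hx.ne']
  exact sinh_sub_self_le_cosh_sub_one x

lemma huygensThreshold_lt_one_third {x : ℝ} (hx : 0 < x) : huygensThreshold x < 1 / 3 := by
  rw [huygensThreshold, div_lt_iff₀ (mul_cosh_sub_one_pos hx)]
  linarith [three_mul_sinh_lt_mul_two_add_cosh hx]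

lemma one_div_three_mul_cosh_le_huygensThreshold {x : ℝ} (hx : 0 < x) :
    1 / (3 * cosh x) ≤ huygensThreshold x := by
  rw [huygensThreshold, div_le_div_iff₀ (by positivity) (mul_cosh_sub_one_pos hx)]
  nlinarith [two_mul_cosh_lt_two_add_sq_mul_cosh hx, add_pow_three_div_six_lt_sinh hx,
    cosh_pos x]

lemma tendsto_huygensThreshold_nhdsGT_zero :
    Tendsto huygensThreshold (𝓝[>] 0) (𝓝 (1 / 3)) := by
  have hlower : Tendsto (fun x => 1 / (3 * cosh x)) (𝓝[>] 0) (𝓝 (1 / 3)) := by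
    have hcont : Continuous fun x => 1 / (3 * cosh x) :=
      continuous_const.div (by fun_prop) fun x => (mul_pos three_pos (cosh_pos x)).ne'
    simpa using (hcont.tendsto 0).mono_left nhdsWithin_le_nhds
  exact tendsto_of_tendsto_of_tendsto_of_le_of_le' hlower tendsto_const_nhds
    (eventually_nhdsWithin_of_forall fun x hx => one_div_three_mul_cosh_le_huygensThreshold hx)
    (eventually_nhdsWithin_of_forall fun x hx => (huygensThreshold_lt_one_third hx).le)

lemma tendsto_huygensThreshold_atTop : Tendsto huygensThreshold atTop (𝓝 0) :=
  tendsto_of_tendsto_of_tendsto_of_le_of_le' tendsto_const_nhds tendsto_inv_atTop_zero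
    ((eventually_gt_atTop 0).mono fun _ hx => (huygensThreshold_pos hx).le)
    ((eventually_gt_atTop 0).mono fun _ hx => huygensThreshold_le_inv hx)

theorem huygens_type_hyperbolic_reciprocal (p q : ℝ) :
    ((∀ x : ℝ, 0 < x →
      (1 - p) * x / Real.sinh x + p * x / Real.tanh x > 1) ↔ p ≥ 1 / 3) ∧
    ((∀ x : ℝ, 0 < x →
      1 > (1 - q) * x / Real.sinh x + q * x / Real.tanh x) ↔ q ≤ 0) := by
  constructor
  · calc (∀ x : ℝ, 0 < x → (1 - p) * x / sinh x + p * x / tanh x > 1)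
        ↔ ∀ x ∈ Ioi (0 : ℝ), huygensThreshold x < p :=
          forall₂_congr fun x hx => one_lt_huygens_mean_iff hx p
      _ ↔ 1 / 3 ≤ p :=
          forall_apply_lt_iff_le_of_tendsto (l := 𝓝[>] 0) self_mem_nhdsWithin
            (fun _ hx => huygensThreshold_lt_one_third hx) tendsto_huygensThreshold_nhdsGT_zero p
  · calc (∀ x : ℝ, 0 < x → 1 > (1 - q) * x / sinh x + q * x / tanh x)
        ↔ ∀ x ∈ Ioi (0 : ℝ), q < huygensThreshold x :=
          forall₂_congr fun x hx => huygens_mean_lt_one_iff hx q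
      _ ↔ q ≤ 0 :=
          forall_lt_apply_iff_le_of_tendsto (Ioi_mem_atTop 0)
            (fun _ hx => huygensThreshold_pos hx) tendsto_huygensThreshold_atTop q
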